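/- Let Γ be an E-complete maximally tableau FOLP_CS-consistent set of closed Par-formulas, and define the canonical model M = (D, I, E) with respect to Γ and CS by: D = Par; I(Q) = { (u₁,…,uₙ) : Q(u₁,…,uₙ) ∈ Γ } for each n-place predicate symbol Q; and E(t) = { A : ¬t:_{Par(A)} A ∉ Γ }. Then M is a Mkrtychev model of FOLP_CS, i.e., E satisfies all of conditions E1–E6. -/

import Mathlib

open scoped Classical

/-- Justification terms of FOLP, built from justification variables `jvar i`,
justification constants `jconst i`, and the operations `+`, `·`, `!`, `genₓ`. -/
inductive Tm : Type
  | jvar : ℕ → Tm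
  | jconst : ℕ → Tm
  | plus : Tm → Tm → Tm
  | app : Tm → Tm → Tm
  | bang : Tm → Tm
  | gen : ℕ → Tm → Tm
  deriving DecidableEq

/-- FOLP formulas with extra individual constants from `K` (`K`-formulas).
Individual variables are natural numbers; an argument `Sum.inl x` is an individual
variable, `Sum.inr a` is an element of `K`.  Predicate symbols are indexed by `ℕ`.
Plain FOLP formulas are `Fm Empty`, Par-formulas are `Fm ℕ` (the parameters being a
separate copy of ℕ, namely the `Sum.inr` part), and `D`-formulas are `Fm D`.
`just t X A` is the justification assertion `t :_X A`. -/
inductive Fm (K : Type) : Type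
  | pred : ℕ → List (ℕ ⊕ K) → Fm K
  | neg : Fm K → Fm K
  | imp : Fm K → Fm K → Fm K
  | all : ℕ → Fm K → Fm K
  | ex : ℕ → Fm K → Fm K
  | just : Tm → Finset (ℕ ⊕ K) → Fm K → Fm K

namespace Fm

variable {K K' : Type}

/-- Free individual variables of a `K`-formula.  Recall that
`FVar (t :_X A) = X` (more precisely, the individual-variable part of `X`). -/
noncomputable def fvar : Fm K → Finset ℕ
  | pred _ args => (args.filterMap Sum.getLeft?).toFinset
  | neg A => A.fvar
  | imp A B => A.fvar ∪ B.fvar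
  | all x A => A.fvar.erase x
  | ex x A => A.fvar.erase x
  | just _ X _ => (X.toList.filterMap Sum.getLeft?).toFinset

/-- The elements of `K` occurring in a `K`-formula (for `K = Par` this is `Par(A)`,
for `K = D` this is `D(A)`). -/
noncomputable def kocc : Fm K → Finset K
  | pred _ args => (args.filterMap Sum.getRight?).toFinset
  | neg A => A.kocc
  | imp A B => A.kocc ∪ B.kocc
  | all _ A => A.kocc
  | ex _ A => A.kocc
  | just _ X A => A.kocc ∪ (X.toList.filterMap Sum.getRight?).toFinset

/-- A `K`-formula is closed if it contains no free occurrences of individual variables. -/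
def Closed (A : Fm K) : Prop := A.fvar = ∅

/-- Action of a partial substitution (of elements of `K` for individual variables)
on variables/`K`-elements. -/
def subK (σ : ℕ → Option K) : ℕ ⊕ K → ℕ ⊕ K
  | .inl x => (σ x).elim (.inl x) .inr
  | .inr a => .inr a

/-- Simultaneous substitution of elements of `K` for free individual variables.
In `t :_X A` only the variables belonging to `X` are free, so only those get
substituted (both inside `X` and inside `A`). -/
noncomputable def msubst (σ : ℕ → Option K) : Fm K → Fm K
  | pred Q args => pred Q (args.map (subK σ))
  | neg A => neg (A.msubst σ)
  | imp A B => imp (A.msubst σ) (B.msubst σ)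
  | all x A => all x (A.msubst fun y => if y = x then none else σ y)
  | ex x A => ex x (A.msubst fun y => if y = x then none else σ y)
  | just t X A =>
      just t (X.image (subK σ)) (A.msubst fun y => if Sum.inl y ∈ X then σ y else none)

/-- `A.subst1 x a` is `A(a)`, i.e. `A{x/a}`: the result of replacing all free
occurrences of the individual variable `x` by the element `a : K`. -/
noncomputable def subst1 (x : ℕ) (a : K) (A : Fm K) : Fm K :=
  A.msubst fun y => if y = x then some a else none

/-- Action of a variable-for-variable substitution on arguments. -/
def subVV (x y : ℕ) : ℕ ⊕ K → ℕ ⊕ K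
  | .inl z => if z = x then .inl y else .inl z
  | .inr a => .inr a

/-- `A.vsubst x y` is `A{x/y}`: substitution of the individual variable `y` for
the free occurrences of the individual variable `x`. -/
noncomputable def vsubst (x y : ℕ) : Fm K → Fm K
  | pred Q args => pred Q (args.map (subVV x y))
  | neg A => neg (A.vsubst x y)
  | imp A B => imp (A.vsubst x y) (B.vsubst x y)
  | all z A => if z = x then all z A else all z (A.vsubst x y)
  | ex z A => if z = x then ex z A else ex z (A.vsubst x y)
  | just t X A =>
      if Sum.inl x ∈ X then just t (X.image (subVV x y)) (A.vsubst x y) else just t X A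

/-- `FreeFor y x A`: the variable `y` is substitutable for the variable `x` in `A`
(no free occurrence of `x` lies in the scope of a quantifier binding `y`). -/
def FreeFor (y x : ℕ) : Fm K → Prop
  | pred _ _ => True
  | neg A => FreeFor y x A
  | imp A B => FreeFor y x A ∧ FreeFor y x B
  | all z A => x = z ∨ x ∉ A.fvar ∨ (y ≠ z ∧ FreeFor y x A)
  | ex z A => x = z ∨ x ∉ A.fvar ∨ (y ≠ z ∧ FreeFor y x A)
  | just _ X A => Sum.inl x ∈ X → FreeFor y x A

/-- Action of a renaming on arguments. -/
def subR (σ : ℕ → ℕ) : ℕ ⊕ K → ℕ ⊕ K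
  | .inl x => .inl (σ x)
  | .inr a => .inr a

/-- Renaming of all (free and bound) individual variables. -/
noncomputable def rename (σ : ℕ → ℕ) : Fm K → Fm K
  | pred Q args => pred Q (args.map (subR σ))
  | neg A => neg (A.rename σ)
  | imp A B => imp (A.rename σ) (B.rename σ)
  | all x A => all (σ x) (A.rename σ)
  | ex x A => ex (σ x) (A.rename σ)
  | just t X A => just t (X.image (subR σ)) (A.rename σ)

/-- Mapping the extra individual constants of a `K`-formula along `f : K → K'`. -/
noncomputable def kmap (f : K → K') : Fm K → Fm K'
  | pred Q args => pred Q (args.map (Sum.map id f))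
  | neg A => neg (A.kmap f)
  | imp A B => imp (A.kmap f) (B.kmap f)
  | all x A => all x (A.kmap f)
  | ex x A => ex x (A.kmap f)
  | just t X A => just t (X.image (Sum.map id f)) (A.kmap f)

/-- A size measure used for the well-founded recursion defining truth. -/
noncomputable def size : Fm K → ℕ
  | pred _ _ => 0
  | neg A => A.size + 1
  | imp A B => A.size + B.size + 1
  | all _ A => A.size + 1
  | ex _ A => A.size + 1
  | just _ _ A => A.size + A.fvar.card + 1


theorem fvar_msubst_subset (σ : ℕ → Option K) (A : Fm K) :
    (A.msubst σ).fvar ⊆ A.fvar := by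
  induction A generalizing σ with
  | pred Q args =>
      intro y hy
      simp only [msubst, fvar, List.mem_toFinset, List.mem_filterMap, List.mem_map] at hy ⊢
      obtain ⟨s, ⟨a, ha, rfl⟩, hget⟩ := hy
      cases a with
      | inl z =>
          cases hσ : σ z with
          | none =>
              simp [subK, hσ] at hget
              exact ⟨Sum.inl z, ha, by simp [hget]⟩
          | some b => simp [subK, hσ] at hget
      | inr b => simp [subK] at hget
  | neg A ih => exact ih σ
  | imp A B ihA ihB =>
      simp only [msubst, fvar]
      exact Finset.union_subset_union (ihA σ) (ihB σ)
  | all x A ih =>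
      simp only [msubst, fvar]
      exact Finset.erase_subset_erase x (ih _)
  | ex x A ih =>
      simp only [msubst, fvar]
      exact Finset.erase_subset_erase x (ih _)
  | just t X A ih =>
      intro y hy
      simp only [msubst, fvar, List.mem_toFinset, List.mem_filterMap,
        Finset.mem_toList, Finset.mem_image] at hy ⊢
      obtain ⟨s, ⟨a, ha, rfl⟩, hget⟩ := hy
      cases a with
      | inl z =>
          cases hσ : σ z with
          | none =>
              refine ⟨Sum.inl z, ha, ?_⟩
              simp only [subK, hσ, Option.elim] at hget
              simpa using hget
          | some b => simp [subK, hσ] at hget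
      | inr b => simp [subK] at hget

theorem size_msubst_le (σ : ℕ → Option K) (A : Fm K) :
    (A.msubst σ).size ≤ A.size := by
  induction A generalizing σ with
  | pred Q args => simp [msubst, size]
  | neg A ih => simpa [msubst, size] using ih σ
  | imp A B ihA ihB =>
      simp only [msubst, size]
      have := ihA σ; have := ihB σ; omega
  | all x A ih => simpa [msubst, size] using ih _
  | ex x A ih => simpa [msubst, size] using ih _
  | just t X A ih =>
      simp only [msubst, size]
      have h1 := ih (fun y => if Sum.inl y ∈ X then σ y else none)
      have h2 := Finset.card_le_card
        (fvar_msubst_subset (fun y => if Sum.inl y ∈ X then σ y else none) A)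
      omega

theorem size_subst1_le (x : ℕ) (a : K) (A : Fm K) : (A.subst1 x a).size ≤ A.size :=
  size_msubst_le _ A


/-- `∀A`, the universal closure of `A`. -/
noncomputable def univClosure (A : Fm K) : Fm K :=
  (A.fvar.sort (· ≤ ·)).foldr Fm.all A

theorem size_foldr_all (l : List ℕ) (A : Fm K) :
    (l.foldr Fm.all A).size = A.size + l.length := by
  induction l with
  | nil => simp
  | cons z l ih => simp only [List.foldr, size, ih, List.length_cons]; omega

theorem size_univClosure (A : Fm K) :
    A.univClosure.size = A.size + A.fvar.card := by
  simp [univClosure, size_foldr_all, Finset.length_sort]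

end Fm

/-- Embedding plain FOLP formulas into `K`-formulas. -/
noncomputable def toK {K : Type} : Fm Empty → Fm K := Fm.kmap (fun a => a.elim)

/-- Two FOLP formulas are variable variants if each can be turned into the other
by a renaming of free and bound individual variables. -/
def VariableVariant (A B : Fm Empty) : Prop := ∃ σ : Equiv.Perm ℕ, B = A.rename σ

/-- The axioms of FOLP: a complete list of first order axiom schemes together
with the justification axiom schemes Ctr, Exp, Sum, jK, jT, j4, Gen. -/
inductive FOLPAxiom : Fm Empty → Prop
  | p1 (A B : Fm Empty) : FOLPAxiom (A.imp (B.imp A))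
  | p2 (A B C : Fm Empty) : FOLPAxiom ((A.imp (B.imp C)).imp ((A.imp B).imp (A.imp C)))
  | p3 (A B : Fm Empty) : FOLPAxiom (((A.neg).imp (B.neg)).imp (B.imp A))
  | allElim (x y : ℕ) (A : Fm Empty) : Fm.FreeFor y x A → FOLPAxiom ((Fm.all x A).imp (A.vsubst x y))
  | allImp (x : ℕ) (A B : Fm Empty) : x ∉ A.fvar →
      FOLPAxiom ((Fm.all x (A.imp B)).imp (A.imp (Fm.all x B)))
  | exIntro (x y : ℕ) (A : Fm Empty) : Fm.FreeFor y x A → FOLPAxiom ((A.vsubst x y).imp (Fm.ex x A))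
  | exElim (x : ℕ) (A B : Fm Empty) : x ∉ B.fvar →
      FOLPAxiom ((Fm.all x (A.imp B)).imp ((Fm.ex x A).imp B))
  | ctr (t : Tm) (X : Finset (ℕ ⊕ Empty)) (A : Fm Empty) (y : ℕ) : Sum.inl y ∉ X → y ∉ A.fvar →
      FOLPAxiom ((Fm.just t (insert (Sum.inl y) X) A).imp (Fm.just t X A))
  | exp (t : Tm) (X : Finset (ℕ ⊕ Empty)) (A : Fm Empty) (y : ℕ) : Sum.inl y ∉ X →
      FOLPAxiom ((Fm.just t X A).imp (Fm.just t (insert (Sum.inl y) X) A))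
  | sum1 (s t : Tm) (X : Finset (ℕ ⊕ Empty)) (A : Fm Empty) : FOLPAxiom ((Fm.just s X A).imp (Fm.just (Tm.plus s t) X A))
  | sum2 (s t : Tm) (X : Finset (ℕ ⊕ Empty)) (A : Fm Empty) : FOLPAxiom ((Fm.just s X A).imp (Fm.just (Tm.plus t s) X A))
  | jK (s t : Tm) (X : Finset (ℕ ⊕ Empty)) (A B : Fm Empty) : FOLPAxiom ((Fm.just s X (A.imp B)).imp
      ((Fm.just t X A).imp (Fm.just (Tm.app s t) X B)))
  | jT (t : Tm) (X : Finset (ℕ ⊕ Empty)) (A : Fm Empty) : FOLPAxiom ((Fm.just t X A).imp A)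
  | j4 (t : Tm) (X : Finset (ℕ ⊕ Empty)) (A : Fm Empty) : FOLPAxiom ((Fm.just t X A).imp (Fm.just (Tm.bang t) X (Fm.just t X A)))
  | gen (t : Tm) (X : Finset (ℕ ⊕ Empty)) (A : Fm Empty) (x : ℕ) : Sum.inl x ∉ X →
      FOLPAxiom ((Fm.just t X A).imp (Fm.just (Tm.gen x t) X (Fm.all x A)))

/-- A constant specification is a set of pairs `(c, A)`, read `c : A`
(that is, `c :_∅ A`), where `A` is an axiom instance. -/
def ConstantSpec (CS : Set (ℕ × Fm Empty)) : Prop := ∀ p ∈ CS, FOLPAxiom p.2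

/-- `CS` is axiomatically appropriate: every axiom instance has a constant justifying it. -/
def AxiomaticallyAppropriate (CS : Set (ℕ × Fm Empty)) : Prop :=
  ∀ A, FOLPAxiom A → ∃ c, (c, A) ∈ CS

/-- `CS` is variant closed. -/
def VariantClosed (CS : Set (ℕ × Fm Empty)) : Prop :=
  ∀ c A B, VariableVariant A B → ((c, A) ∈ CS ↔ (c, B) ∈ CS)

/-- Derivability in the axiomatic system `FOLP_CS`:  axioms, axiom necessitation
restricted to `CS`, modus ponens, and universal generalization. -/
inductive Deriv (CS : Set (ℕ × Fm Empty)) : Fm Empty → Prop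
  | ax {A : Fm Empty} : FOLPAxiom A → Deriv CS A
  | an {c : ℕ} {A : Fm Empty} : (c, A) ∈ CS → Deriv CS (Fm.just (Tm.jconst c) ∅ A)
  | mp {A B : Fm Empty} : Deriv CS (A.imp B) → Deriv CS A → Deriv CS B
  | ug {A : Fm Empty} (x : ℕ) : Deriv CS A → Deriv CS (Fm.all x A)

/-- A Mkrtychev model of `FOLP_CS` with domain `D`:  an interpretation `I` of the
predicate symbols and an admissible evidence function `E` satisfying E1–E6. -/
structure MModel (CS : Set (ℕ × Fm Empty)) (D : Type) : Type where
  dom_nonempty : Nonempty D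
  I : ℕ → Set (List D)
  E : Tm → Set (Fm D)
  e1 : ∀ c A, (c, A) ∈ CS → toK A ∈ E (Tm.jconst c)
  e2 : ∀ s t (A B : Fm D), Fm.imp A B ∈ E s → A ∈ E t → B ∈ E (Tm.app s t)
  e3 : ∀ s t, E s ∪ E t ⊆ E (Tm.plus s t)
  e4 : ∀ t (A : Fm D) (X : Finset D), A ∈ E t → A.kocc ⊆ X →
      Fm.just t (X.image Sum.inr) A ∈ E (Tm.bang t)
  e5 : ∀ t (x : ℕ) (A : Fm D), A ∈ E t → Fm.all x A ∈ E (Tm.gen x t)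
  e6 : ∀ t (A : Fm D) (x : ℕ) (a : D), A ∈ E t → A.subst1 x a ∈ E t

/-- Truth of a (closed) `D`-formula in a Mkrtychev model. -/
noncomputable def MModel.Sat {CS : Set (ℕ × Fm Empty)} {D : Type} (M : MModel CS D) :
    Fm D → Prop
  | .pred Q args => ∃ as : List D, args = as.map Sum.inr ∧ as ∈ M.I Q
  | .neg A => ¬ M.Sat A
  | .imp A B => M.Sat A → M.Sat B
  | .all x A => ∀ a : D, M.Sat (A.subst1 x a)
  | .ex x A => ∃ a : D, M.Sat (A.subst1 x a)
  | .just t _ A => A ∈ M.E t ∧ M.Sat A.univClosure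
  termination_by F => F.size
  decreasing_by
    all_goals simp only [Fm.size, Fm.size_univClosure]
    all_goals first
      | omega
      | exact Nat.lt_succ_of_le (Fm.size_subst1_le _ _ _)

/-- Truth of an FOLP sentence in a Mkrtychev model. -/
noncomputable def MModel.SatSentence {CS : Set (ℕ × Fm Empty)} {D : Type}
    (M : MModel CS D) (F : Fm Empty) : Prop := M.Sat (toK F)

/-- A sentence is `FOLP_CS`-valid if it is true in every Mkrtychev model of `FOLP_CS`. -/
def FOLPValid (CS : Set (ℕ × Fm Empty)) (F : Fm Empty) : Prop :=
  ∀ (D : Type) (M : MModel CS D), M.SatSentence F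

/-- Satisfiability of a closed Par-formula `A(u₁,…,uₙ)` in a model:
`M ⊩ A(a₁,…,aₙ)` for some `a₁,…,aₙ ∈ D`. -/
noncomputable def MModel.SatPar {CS : Set (ℕ × Fm Empty)} {D : Type}
    (M : MModel CS D) (F : Fm ℕ) : Prop :=
  ∃ g : ℕ → D, M.Sat (F.kmap g)

/-- `X ⊆ Par`: the set `X` consists of parameters only. -/
def XPar (X : Finset (ℕ ⊕ ℕ)) : Prop := ∀ s ∈ X, ∃ u : ℕ, s = Sum.inr u

/-- One application of an FOLP tableau rule to a branch (represented by the set `S`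
of closed Par-formulas occurring on it), producing the list of extended branches
(one branch for a non-branching rule, two for a branching rule). -/
inductive TabRule : Set (Fm ℕ) → List (Set (Fm ℕ)) → Prop
  | fneg {S A} : Fm.neg (Fm.neg A) ∈ S → TabRule S [insert A S]
  | timp {S A B} : Fm.imp A B ∈ S → TabRule S [insert (Fm.neg A) S, insert B S]
  | fimp {S A B} : Fm.neg (Fm.imp A B) ∈ S → TabRule S [insert A (insert (Fm.neg B) S)]
  | tall {S x A} (u : ℕ) : Fm.all x A ∈ S → TabRule S [insert (A.subst1 x u) S]
  | fex {S x A} (u : ℕ) : Fm.neg (Fm.ex x A) ∈ S →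
      TabRule S [insert (Fm.neg (A.subst1 x u)) S]
  | tex {S x A} (u : ℕ) : Fm.ex x A ∈ S → (∀ F ∈ S, u ∉ F.kocc) →
      TabRule S [insert (A.subst1 x u) S]
  | fall {S x A} (u : ℕ) : Fm.neg (Fm.all x A) ∈ S → (∀ F ∈ S, u ∉ F.kocc) →
      TabRule S [insert (Fm.neg (A.subst1 x u)) S]
  | tcolon {S t X A} : Fm.just t X A ∈ S → XPar X → TabRule S [insert A.univClosure S]
  | fplus {S t s X A} : Fm.neg (Fm.just (Tm.plus t s) X A) ∈ S → XPar X →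
      TabRule S [insert (Fm.neg (Fm.just t X A)) (insert (Fm.neg (Fm.just s X A)) S)]
  | fapp {S s t X B} (A : Fm ℕ) : Fm.neg (Fm.just (Tm.app s t) X B) ∈ S → XPar X →
      (∀ u ∈ A.kocc, Sum.inr u ∈ X) →
      TabRule S [insert (Fm.neg (Fm.just s X (A.imp B))) S,
                 insert (Fm.neg (Fm.just t X A)) S]
  | fbang {S t X A} : Fm.neg (Fm.just (Tm.bang t) X (Fm.just t X A)) ∈ S → XPar X →
      TabRule S [insert (Fm.neg (Fm.just t X A)) S]
  | ctr {S t X A} (u : ℕ) : Fm.neg (Fm.just t X A) ∈ S → XPar X → Sum.inr u ∉ X →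
      TabRule S [insert (Fm.neg (Fm.just t (insert (Sum.inr u) X) A)) S]
  | exp {S t X A} (u : ℕ) : Fm.neg (Fm.just t (insert (Sum.inr u) X) A) ∈ S →
      XPar X → Sum.inr u ∉ X → u ∉ A.kocc →
      TabRule S [insert (Fm.neg (Fm.just t X A)) S]
  | ins {S t X A} (x u : ℕ) : Fm.neg (Fm.just t X (A.subst1 x u)) ∈ S → XPar X →
      TabRule S [insert (Fm.neg (Fm.just t X A)) S]
  | genx {S t X A x} : Fm.neg (Fm.just (Tm.gen x t) X (Fm.all x A)) ∈ S → XPar X →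
      TabRule S [insert (Fm.neg (Fm.just t X A)) S]

/-- `ClosedTableau CS S`: there is a closed `FOLP_CS`-tableau beginning with the
formulas of `S`.  A branch closes if it contains both `A` and `¬A`, or contains
`¬c:A` with `c:A ∈ CS`. -/
inductive ClosedTableau (CS : Set (ℕ × Fm Empty)) : Set (Fm ℕ) → Prop
  | close {S A} : A ∈ S → Fm.neg A ∈ S → ClosedTableau CS S
  | closeCS {S c A} : (c, A) ∈ CS →
      Fm.neg (Fm.just (Tm.jconst c) ∅ (toK A)) ∈ S → ClosedTableau CS S
  | step {S l} : TabRule S l → (∀ S' ∈ l, ClosedTableau CS S') → ClosedTableau CS S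

/-- An `FOLP_CS`-tableau proof of the sentence `F`: a closed tableau beginning
with `¬F`. -/
def TabProof (CS : Set (ℕ × Fm Empty)) (F : Fm Empty) : Prop :=
  ClosedTableau CS {Fm.neg (toK F)}

/-- A set of closed Par-formulas is tableau `FOLP_CS`-consistent if no finite
subset of it has a closed `FOLP_CS`-tableau. -/
def TabConsistent (CS : Set (ℕ × Fm Empty)) (Γ : Set (Fm ℕ)) : Prop :=
  ∀ S : Set (Fm ℕ), S ⊆ Γ → S.Finite → ¬ ClosedTableau CS S

/-- `Γ` is maximal: it has no proper tableau consistent extension by closed Par-formulas. -/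
def MaximalCons (CS : Set (ℕ × Fm Empty)) (Γ : Set (Fm ℕ)) : Prop :=
  TabConsistent CS Γ ∧
    ∀ Δ : Set (Fm ℕ), Γ ⊆ Δ → (∀ F ∈ Δ, F.Closed) → TabConsistent CS Δ → Δ = Γ

/-- `Γ` is E-complete (with parameters as witnesses). -/
def EComplete (Γ : Set (Fm ℕ)) : Prop :=
  (∀ (x : ℕ) (A : Fm ℕ), Fm.ex x A ∈ Γ → ∃ u : ℕ, A.subst1 x u ∈ Γ) ∧
  (∀ (x : ℕ) (A : Fm ℕ), Fm.neg (Fm.all x A) ∈ Γ → ∃ u : ℕ, Fm.neg (A.subst1 x u) ∈ Γ)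

/-- The interpretation of the canonical model determined by `Γ`:
`I(Q) = { (u₁,…,uₙ) | Q(u₁,…,uₙ) ∈ Γ }`. -/
def canI (Γ : Set (Fm ℕ)) (Q : ℕ) : Set (List ℕ) :=
  {us | Fm.pred Q (us.map Sum.inr) ∈ Γ}

/-- The evidence function of the canonical model determined by `Γ`:
`E(t) = { A | ¬ t:_{Par(A)} A ∉ Γ }`. -/
def canE (Γ : Set (Fm ℕ)) (t : Tm) : Set (Fm ℕ) :=
  {A | Fm.neg (Fm.just t (A.kocc.image Sum.inr) A) ∉ Γ}

/-!
Each of E2–E6 is the contrapositive of a tableau rule read inside `Γ`: if `¬t:_{Par(A)} A ∈ Γ`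
for a compound term `t`, the F-rule for the outermost operation of `t` (F·, F+, F!, Fgen) or the
instantiation rule puts the premises' negated justification assertions into `Γ`, and Ctr/Exp
let one move freely between the index sets `Par(A)` and any finite superset of it. E1 holds
because `¬c:A` with `c:A ∈ CS` closes a branch outright.

A maximal consistent `Γ` is closed under rules: if a conclusion `F ∉ Γ`, maximality gives a
finite `S₀ ⊆ Γ` with a closed tableau for `insert F S₀`, and weakening that tableau closes the
one obtained by applying the rule to a finite part of `Γ`. Weakening is the delicate point,
because of the freshness conditions of T∃ and F∀; it is proved more generally for images under
injective renamings of parameters, so that an eigenparameter that is no longer fresh in the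
larger set can be swapped for one that is.
-/

namespace Fm

variable {K K' K'' : Type}

@[simp]
lemma mem_toFinset_filterMap_getRight {l : List (ℕ ⊕ K)} {a : K} :
    a ∈ (l.filterMap Sum.getRight?).toFinset ↔ Sum.inr a ∈ l := by
  simp [List.mem_filterMap, Sum.getRight?_eq_some_iff]

@[simp]
lemma mem_toFinset_filterMap_getLeft {l : List (ℕ ⊕ K)} {x : ℕ} :
    x ∈ (l.filterMap Sum.getLeft?).toFinset ↔ Sum.inl x ∈ l := by
  simp [List.mem_filterMap, Sum.getLeft?_eq_some_iff]

lemma mem_kocc_kmap {f : K → K'} {A : Fm K} {b : K'} :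
    b ∈ (A.kmap f).kocc ↔ ∃ a ∈ A.kocc, f a = b := by
  induction A <;> simp_all [kmap, kocc, or_and_right, exists_or]

lemma fvar_kmap (f : K → K') (A : Fm K) : (A.kmap f).fvar = A.fvar := by
  induction A with
  | pred Q args => ext; simp [kmap, fvar]
  | neg A ih => simpa [kmap, fvar] using ih
  | imp A B ihA ihB => simp [kmap, fvar, ihA, ihB]
  | all x A ih => simp [kmap, fvar, ih]
  | ex x A ih => simp [kmap, fvar, ih]
  | just t X A ih => ext; simp [kmap, fvar]

@[simp]
lemma kmap_id (A : Fm K) : A.kmap id = A := by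
  induction A <;> simp_all [kmap]

lemma kmap_kmap (g : K → K') (f : K' → K'') (A : Fm K) :
    (A.kmap g).kmap f = A.kmap (f ∘ g) := by
  induction A <;> simp_all [kmap, Finset.image_image]

lemma kmap_congr {f g : K → K'} {A : Fm K} (h : ∀ a ∈ A.kocc, f a = g a) :
    A.kmap f = A.kmap g := by
  induction A with
  | pred Q args =>
    simp only [kmap, pred.injEq, true_and]
    refine List.map_congr_left fun s hs => ?_
    cases s <;> simp_all [kocc]
  | neg A ih => simp_all [kmap, kocc]
  | imp A B ihA ihB => simp_all [kmap, kocc]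
  | all x A ih => simp_all [kmap, kocc]
  | ex x A ih => simp_all [kmap, kocc]
  | just t X A ih =>
    simp only [kmap, kocc, Finset.mem_union, just.injEq, true_and] at h ⊢
    refine ⟨Finset.image_congr fun s hs => ?_, ih fun a ha => h a (.inl ha)⟩
    cases s <;> simp_all

lemma sumMap_subK (f : K → K') (σ : ℕ → Option K) (s : ℕ ⊕ K) :
    Sum.map id f (subK σ s) = subK (fun y => (σ y).map f) (Sum.map id f s) := by
  rcases s with x | a
  · cases h : σ x <;> simp [subK, h]
  · simp [subK]

lemma kmap_msubst (f : K → K') (σ : ℕ → Option K) (A : Fm K) :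
    (A.msubst σ).kmap f = (A.kmap f).msubst fun y => (σ y).map f := by
  induction A generalizing σ with
  | pred Q args =>
    simpa [msubst, kmap] using List.map_congr_left fun s _ => sumMap_subK f σ s
  | neg A ih => simp [msubst, kmap, ih]
  | imp A B ihA ihB => simp [msubst, kmap, ihA, ihB]
  | all x A ih => simp only [msubst, kmap, ih]; congr; funext y; split_ifs <;> simp
  | ex x A ih => simp only [msubst, kmap, ih]; congr; funext y; split_ifs <;> simp
  | just t X A ih =>
    simp only [msubst, kmap, ih, Finset.image_image, just.injEq, true_and]
    refine ⟨Finset.image_congr fun s _ => sumMap_subK f σ s, ?_⟩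
    congr; funext y
    by_cases hy : Sum.inl y ∈ X <;> simp [hy]

lemma kmap_subst1 (f : K → K') (x : ℕ) (a : K) (A : Fm K) :
    (A.subst1 x a).kmap f = (A.kmap f).subst1 x (f a) := by
  rw [subst1, kmap_msubst, subst1]
  congr; funext y; split_ifs <;> simp

lemma kmap_univClosure (f : K → K') (A : Fm K) :
    A.univClosure.kmap f = (A.kmap f).univClosure := by
  rw [univClosure, univClosure, fvar_kmap]
  induction A.fvar.sort (· ≤ ·) <;> simp_all [kmap]

lemma kocc_subset_kocc_msubst (σ : ℕ → Option K) (A : Fm K) :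
    A.kocc ⊆ (A.msubst σ).kocc := by
  induction A generalizing σ with
  | pred Q args => intro a; simpa [kocc, msubst] using fun h => .inr ⟨_, h, rfl⟩
  | neg A ih => exact ih σ
  | imp A B ihA ihB => exact Finset.union_subset_union (ihA σ) (ihB σ)
  | all x A ih => exact ih _
  | ex x A ih => exact ih _
  | just t X A ih =>
    refine Finset.union_subset_union (ih _) fun a => ?_
    simp only [mem_toFinset_filterMap_getRight, Finset.mem_toList, Finset.mem_image]
    exact fun h => ⟨_, h, rfl⟩

end Fm

lemma kmap_toK {K K' : Type} (f : K → K') (A : Fm Empty) : (toK A).kmap f = toK A := by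
  rw [toK, toK, Fm.kmap_kmap]
  congr 1
  funext a
  exact a.elim

lemma kocc_toK {K : Type} (A : Fm Empty) : (toK A : Fm K).kocc = ∅ := by
  ext b
  simp only [toK, Fm.mem_kocc_kmap, Finset.notMem_empty, iff_false, not_exists, not_and]
  exact fun a _ => a.elim

open Function

lemma TabRule.finite_of_mem {S : Set (Fm ℕ)} {l : List (Set (Fm ℕ))} (r : TabRule S l)
    (hS : S.Finite) : ∀ S' ∈ l, S'.Finite := by
  cases r <;> simp [hS.insert, (hS.insert _).insert]

lemma exists_fresh_param {T : Set (Fm ℕ)} (hT : T.Finite) : ∃ u : ℕ, ∀ F ∈ T, u ∉ F.kocc := by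
  obtain ⟨u, hu⟩ := (hT.biUnion fun F _ => F.kocc.finite_toSet).infinite_compl.nonempty
  exact ⟨u, fun F hF hmem => hu (Set.mem_biUnion hF hmem)⟩

def ParRenamingInto (S T : Set (Fm ℕ)) : Prop :=
  ∃ π : ℕ → ℕ, Injective π ∧ Fm.kmap π '' S ⊆ T

section Renaming

variable {π : ℕ → ℕ} {S T : Set (Fm ℕ)}

lemma image_kmap_insert_subset (hST : Fm.kmap π '' S ⊆ T) {F F' : Fm ℕ}
    (hF : F.kmap π = F') : Fm.kmap π '' insert F S ⊆ insert F' T := by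
  rw [Set.image_insert_eq, hF]
  exact Set.insert_subset_insert hST

/-- Composing `π` with the swap of `π u` and a parameter fresh for `T` does not move `S`
when `u` is fresh for `S`. -/
lemma exists_injective_kmap_eq_of_fresh (hπ : Injective π) (hST : Fm.kmap π '' S ⊆ T)
    (hT : T.Finite) {u : ℕ} (hu : ∀ F ∈ S, u ∉ F.kocc) :
    ∃ π' : ℕ → ℕ, Injective π' ∧ (∀ F ∈ T, π' u ∉ F.kocc) ∧ Fm.kmap π' '' S ⊆ T ∧
      ∀ F ∈ S, F.kmap π' = F.kmap π := by
  obtain ⟨u', hu'⟩ := exists_fresh_param hT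
  have hS : ∀ F ∈ S, F.kmap (Equiv.swap (π u) u' ∘ π) = F.kmap π := by
    refine fun F hF => Fm.kmap_congr fun a ha => Equiv.swap_apply_of_ne_of_ne ?_ ?_
    · exact fun h => hu F hF (hπ h ▸ ha)
    · exact fun h => hu' _ (hST ⟨F, hF, rfl⟩) (Fm.mem_kocc_kmap.2 ⟨a, ha, h⟩)
  refine ⟨_, (Equiv.injective _).comp hπ, by simpa using hu', ?_, hS⟩
  exact (Set.image_congr hS).trans_subset hST

/- Lemmas about images in `Finset (ℕ ⊕ ℕ)` take the `DecidableEq` instance as an implicit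
argument: `kmap` and `MModel` are stated for a generic `K`, so at `K = ℕ` their images carry a
classical instance, not the one that instance search finds for `ℕ ⊕ ℕ`. -/
lemma XPar.image_sumMap {_ : DecidableEq (ℕ ⊕ ℕ)} {X : Finset (ℕ ⊕ ℕ)} (hX : XPar X)
    (π : ℕ → ℕ) : XPar (X.image (Sum.map id π)) := by
  simp only [XPar, Finset.mem_image, forall_exists_index, and_imp, forall_apply_eq_imp_iff₂]
  intro s hs
  obtain ⟨u, rfl⟩ := hX s hs
  exact ⟨π u, rfl⟩

lemma inr_notMem_image_sumMap {_ : DecidableEq (ℕ ⊕ ℕ)} {π : ℕ → ℕ} (hπ : Injective π)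
    {X : Finset (ℕ ⊕ ℕ)} {u : ℕ} (hu : Sum.inr u ∉ X) :
    Sum.inr (π u) ∉ X.image (Sum.map id π) := by
  simpa [hπ.eq_iff] using hu

lemma TabRule.exists_of_renamingInto_insert (hπ : Injective π) (hST : Fm.kmap π '' S ⊆ T)
    {F F' : Fm ℕ} (r : TabRule T [insert F' T]) (hF : F.kmap π = F') :
    ∃ l', TabRule T l' ∧ ∀ T' ∈ l', ∃ S' ∈ [insert F S], ParRenamingInto S' T' :=
  ⟨_, r, by simpa using ⟨π, hπ, image_kmap_insert_subset hST hF⟩⟩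

/-- The eigenparameter rules T∃ and F∀ are the cases that need `T` finite and change the
renaming. -/
theorem TabRule.exists_of_renamingInto {l : List (Set (Fm ℕ))} (r : TabRule S l)
    (hπ : Injective π) (hST : Fm.kmap π '' S ⊆ T) (hT : T.Finite) :
    ∃ l', TabRule T l' ∧ ∀ T' ∈ l', ∃ S' ∈ l, ParRenamingInto S' T' := by
  have mem : ∀ {F}, F ∈ S → F.kmap π ∈ T := fun hF => hST ⟨_, hF, rfl⟩
  cases r with
  | fneg hG => exact exists_of_renamingInto_insert hπ hST (.fneg (mem hG)) rfl
  | @timp A B hG =>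
    refine ⟨_, .timp (A := A.kmap π) (B := B.kmap π) (mem hG), ?_⟩
    simpa using ⟨.inl ⟨π, hπ, image_kmap_insert_subset hST rfl⟩,
      .inr ⟨π, hπ, image_kmap_insert_subset hST rfl⟩⟩
  | @fimp A B hG =>
    refine ⟨_, .fimp (A := A.kmap π) (B := B.kmap π) (mem hG), ?_⟩
    simpa using ⟨π, hπ, image_kmap_insert_subset (image_kmap_insert_subset hST rfl) rfl⟩
  | @tall x A u hG =>
    exact exists_of_renamingInto_insert hπ hST (.tall (A := A.kmap π) (π u) (mem hG))
      (Fm.kmap_subst1 ..)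
  | @fex x A u hG =>
    exact exists_of_renamingInto_insert hπ hST (.fex (A := A.kmap π) (π u) (mem hG))
      (congrArg Fm.neg (Fm.kmap_subst1 ..))
  | @tex x A u hG hu =>
    obtain ⟨π', hπ', hu', hST', hπ'S⟩ := exists_injective_kmap_eq_of_fresh hπ hST hT hu
    have hA : A.kmap π' = A.kmap π := by simpa [Fm.kmap] using hπ'S _ hG
    refine exists_of_renamingInto_insert hπ' hST' (.tex (π' u) (mem hG) hu') ?_
    rw [Fm.kmap_subst1, hA]
  | @fall x A u hG hu =>
    obtain ⟨π', hπ', hu', hST', hπ'S⟩ := exists_injective_kmap_eq_of_fresh hπ hST hT hu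
    have hA : A.kmap π' = A.kmap π := by simpa [Fm.kmap] using hπ'S _ hG
    refine exists_of_renamingInto_insert hπ' hST' (.fall (π' u) (mem hG) hu') ?_
    rw [Fm.kmap, Fm.kmap_subst1, hA]
  | @tcolon t X A hG hX =>
    exact exists_of_renamingInto_insert hπ hST (.tcolon (mem hG) (hX.image_sumMap π))
      (Fm.kmap_univClosure ..)
  | @fplus t s X A hG hX =>
    refine ⟨_, .fplus (mem hG) (hX.image_sumMap π), ?_⟩
    simpa using ⟨π, hπ, image_kmap_insert_subset (image_kmap_insert_subset hST rfl) rfl⟩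
  | @fapp s t X B A hG hX hA =>
    refine ⟨_, .fapp (A.kmap π) (mem hG) (hX.image_sumMap π) ?_, ?_⟩
    · intro v hv
      obtain ⟨a, ha, rfl⟩ := Fm.mem_kocc_kmap.1 hv
      simpa using ⟨a, hA a ha, rfl⟩
    simpa using ⟨.inl ⟨π, hπ, image_kmap_insert_subset hST rfl⟩,
      .inr ⟨π, hπ, image_kmap_insert_subset hST rfl⟩⟩
  | @fbang t X A hG hX =>
    exact exists_of_renamingInto_insert hπ hST (.fbang (mem hG) (hX.image_sumMap π)) rfl
  | @ctr t X A u hG hX hu =>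
    refine exists_of_renamingInto_insert hπ hST
      (.ctr (π u) (mem hG) (hX.image_sumMap π) (inr_notMem_image_sumMap hπ hu)) ?_
    simp only [Fm.kmap, Fm.neg.injEq, Fm.just.injEq, true_and, and_true]
    ext; simp
  | @exp t X A u hG hX hu huA =>
    have huA' : π u ∉ (A.kmap π).kocc := by
      rw [Fm.mem_kocc_kmap]
      rintro ⟨a, ha, h⟩
      exact huA (hπ h ▸ ha)
    refine exists_of_renamingInto_insert hπ hST
      (.exp (π u) ?_ (hX.image_sumMap π) (inr_notMem_image_sumMap hπ hu) huA') rfl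
    have hG' := mem hG
    simp only [Fm.kmap] at hG'
    convert hG' using 3
    ext; simp
  | @ins t X A x u hG hX =>
    have hG' := mem hG
    simp only [Fm.kmap, Fm.kmap_subst1] at hG'
    exact exists_of_renamingInto_insert hπ hST (.ins x (π u) hG' (hX.image_sumMap π)) rfl
  | @genx t X A x hG hX =>
    exact exists_of_renamingInto_insert hπ hST (.genx (mem hG) (hX.image_sumMap π)) rfl

end Renaming

section Tableau

variable {CS : Set (ℕ × Fm Empty)}

theorem ClosedTableau.of_renamingInto {S T : Set (Fm ℕ)} (h : ClosedTableau CS S)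
    (hST : ParRenamingInto S T) (hT : T.Finite) : ClosedTableau CS T := by
  induction h generalizing T with
  | close hA hnA =>
    obtain ⟨π, -, hST⟩ := hST
    exact .close (hST ⟨_, hA, rfl⟩) (hST ⟨_, hnA, rfl⟩)
  | closeCS hc hA =>
    obtain ⟨π, -, hST⟩ := hST
    refine .closeCS hc ?_
    simpa [Fm.kmap, kmap_toK] using hST ⟨_, hA, rfl⟩
  | step r _ ih =>
    obtain ⟨π, hπ, hST⟩ := hST
    obtain ⟨l', r', hl'⟩ := r.exists_of_renamingInto hπ hST hT
    refine .step r' fun T' hT' => ?_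
    obtain ⟨S', hS', hS'T'⟩ := hl' T' hT'
    exact ih S' hS' hS'T' (r'.finite_of_mem hT T' hT')

theorem ClosedTableau.mono {S T : Set (Fm ℕ)} (h : ClosedTableau CS S) (hST : S ⊆ T)
    (hT : T.Finite) : ClosedTableau CS T :=
  h.of_renamingInto ⟨id, injective_id, by simpa using hST⟩ hT

end Tableau

lemma XPar.image_inr {_ : DecidableEq (ℕ ⊕ ℕ)} (Z : Finset ℕ) : XPar (Z.image Sum.inr) := by
  simp [XPar]

lemma closed_neg_just {t : Tm} {X : Finset (ℕ ⊕ ℕ)} {A : Fm ℕ} (hX : XPar X) :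
    (Fm.neg (Fm.just t X A)).Closed := by
  simp only [Fm.Closed, Fm.fvar, Finset.eq_empty_iff_forall_notMem,
    Fm.mem_toFinset_filterMap_getLeft, Finset.mem_toList]
  intro x hx
  simpa using hX _ hx

lemma TabConsistent.toK_mem_canE_jconst {CS : Set (ℕ × Fm Empty)} {Γ : Set (Fm ℕ)}
    (hcons : TabConsistent CS Γ) {c : ℕ} {A : Fm Empty} (hc : (c, A) ∈ CS) :
    toK A ∈ canE Γ (.jconst c) := by
  intro h
  rw [kocc_toK, Finset.image_empty] at h
  exact hcons _ (Set.singleton_subset_iff.2 h) (Set.finite_singleton _) (.closeCS hc rfl)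

namespace MaximalCons

variable {CS : Set (ℕ × Fm Empty)} {Γ : Set (Fm ℕ)}

lemma exists_closedTableau_insert (hmax : MaximalCons CS Γ) (hclosed : ∀ F ∈ Γ, F.Closed)
    {F : Fm ℕ} (hF : F.Closed) (hFΓ : F ∉ Γ) :
    ∃ S₀ ⊆ Γ, S₀.Finite ∧ ClosedTableau CS (insert F S₀) := by
  have hincons : ¬ TabConsistent CS (insert F Γ) := fun hcons =>
    hFΓ (hmax.2 _ (Set.subset_insert F Γ) (Set.forall_mem_insert.2 ⟨hF, hclosed⟩) hcons ▸
      Set.mem_insert F Γ)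
  simp only [TabConsistent, not_forall, not_not] at hincons
  obtain ⟨S, hS, hSfin, hSct⟩ := hincons
  exact ⟨S \ {F}, Set.sdiff_singleton_subset_iff.2 hS, hSfin.sdiff,
    hSct.mono (Set.subset_insert_sdiff_singleton F S) (hSfin.sdiff.insert F)⟩

/-- Were no `F ∈ Fs` in `Γ`, the refutations of the sets `insert F S₀` would close every branch
of the rule applied to `G` together with all the `S₀`. -/
lemma exists_mem_of_rule (hmax : MaximalCons CS Γ) (hclosed : ∀ F ∈ Γ, F.Closed)
    {G : Fm ℕ} (hG : G ∈ Γ) {Fs : List (Fm ℕ)} (hFs : ∀ F ∈ Fs, F.Closed)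
    {branches : Set (Fm ℕ) → List (Set (Fm ℕ))} (hrule : ∀ S, G ∈ S → TabRule S (branches S))
    (hbranches : ∀ S, ∀ S' ∈ branches S, ∃ F ∈ Fs, insert F S ⊆ S') :
    ∃ F ∈ Fs, F ∈ Γ := by
  by_contra! h
  choose! S₀ hS₀Γ hS₀fin hS₀ using
    fun F hF => exists_closedTableau_insert hmax hclosed (hFs F hF) (h F hF)
  set S := insert G (⋃ F ∈ Fs, S₀ F)
  have hSfin : S.Finite := ((List.finite_toSet Fs).biUnion hS₀fin).insert G
  have r := hrule S (Set.mem_insert G _)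
  refine hmax.1 S (Set.insert_subset hG (Set.iUnion₂_subset hS₀Γ)) hSfin
    (.step r fun S' hS' => ?_)
  obtain ⟨F, hF, hFS'⟩ := hbranches S S' hS'
  refine (hS₀ F hF).mono (subset_trans ?_ hFS') (r.finite_of_mem hSfin S' hS')
  exact Set.insert_subset_insert
    ((Set.subset_biUnion_of_mem (u := S₀) hF).trans (Set.subset_insert G _))

lemma mem_of_rule (hmax : MaximalCons CS Γ) (hclosed : ∀ F ∈ Γ, F.Closed)
    {G F : Fm ℕ} (hG : G ∈ Γ) (hF : F.Closed)
    (hrule : ∀ S, G ∈ S → TabRule S [insert F S]) : F ∈ Γ := by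
  simpa using exists_mem_of_rule hmax hclosed hG (Fs := [F]) (by simpa) hrule (by simp)

lemma mem_or_mem_of_rule (hmax : MaximalCons CS Γ) (hclosed : ∀ F ∈ Γ, F.Closed)
    {G F₁ F₂ : Fm ℕ} (hG : G ∈ Γ) (hF₁ : F₁.Closed) (hF₂ : F₂.Closed)
    (hrule : ∀ S, G ∈ S → TabRule S [insert F₁ S, insert F₂ S]) : F₁ ∈ Γ ∨ F₂ ∈ Γ := by
  simpa using exists_mem_of_rule hmax hclosed hG (Fs := [F₁, F₂]) (by simp [hF₁, hF₂]) hrule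
    (by simp)

lemma mem_and_mem_of_rule (hmax : MaximalCons CS Γ) (hclosed : ∀ F ∈ Γ, F.Closed)
    {G F₁ F₂ : Fm ℕ} (hG : G ∈ Γ) (hF₁ : F₁.Closed) (hF₂ : F₂.Closed)
    (hrule : ∀ S, G ∈ S → TabRule S [insert F₁ (insert F₂ S)]) : F₁ ∈ Γ ∧ F₂ ∈ Γ := by
  constructor
  · simpa using exists_mem_of_rule hmax hclosed hG (Fs := [F₁]) (by simpa) hrule
      (by simpa using fun S => Set.insert_subset_insert (Set.subset_insert F₂ S))
  · simpa using exists_mem_of_rule hmax hclosed hG (Fs := [F₂]) (by simpa) hrule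
      (by simp)

lemma neg_just_insert_mem_iff (hmax : MaximalCons CS Γ) (hclosed : ∀ F ∈ Γ, F.Closed)
    {t : Tm} {X : Finset (ℕ ⊕ ℕ)} {A : Fm ℕ} {u : ℕ} (hX : XPar X) (hu : Sum.inr u ∉ X)
    (huA : u ∉ A.kocc) :
    (Fm.just t (insert (Sum.inr u) X) A).neg ∈ Γ ↔ (Fm.just t X A).neg ∈ Γ := by
  have hX' : XPar (insert (Sum.inr u) X) := (Finset.forall_mem_insert _ _ _).2 ⟨⟨u, rfl⟩, hX⟩
  exact ⟨fun h => mem_of_rule hmax hclosed h (closed_neg_just hX) fun _ hS => .exp u hS hX hu huA,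
    fun h => mem_of_rule hmax hclosed h (closed_neg_just hX') fun _ hS => .ctr u hS hX hu⟩

lemma neg_just_image_mem_iff (hmax : MaximalCons CS Γ) (hclosed : ∀ F ∈ Γ, F.Closed)
    {t : Tm} {A : Fm ℕ} {Z : Finset ℕ} (hZ : A.kocc ⊆ Z) :
    (Fm.just t (Z.image Sum.inr) A).neg ∈ Γ ↔ (Fm.just t (A.kocc.image Sum.inr) A).neg ∈ Γ := by
  obtain ⟨W, hW, rfl⟩ : ∃ W, Disjoint A.kocc W ∧ Z = A.kocc ∪ W :=
    ⟨Z \ A.kocc, Finset.disjoint_sdiff, (Finset.union_sdiff_of_subset hZ).symm⟩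
  clear hZ
  induction W using Finset.induction_on with
  | empty => simp
  | insert u W huW ih =>
    rw [Finset.disjoint_insert_right] at hW
    rw [Finset.union_insert, Finset.image_insert, neg_just_insert_mem_iff hmax hclosed
      (XPar.image_inr _) (by simp [hW.1, huW]) hW.1]
    exact ih hW.2

lemma notMem_canE_iff (hmax : MaximalCons CS Γ) (hclosed : ∀ F ∈ Γ, F.Closed)
    {t : Tm} {A : Fm ℕ} {Z : Finset ℕ} (hZ : A.kocc ⊆ Z) :
    A ∉ canE Γ t ↔ (Fm.just t (Z.image Sum.inr) A).neg ∈ Γ := by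
  rw [canE, Set.mem_ofPred_eq, not_not, neg_just_image_mem_iff hmax hclosed hZ]

lemma mem_canE_app (hmax : MaximalCons CS Γ) (hclosed : ∀ F ∈ Γ, F.Closed) {s t : Tm}
    {A B : Fm ℕ} (hAB : A.imp B ∈ canE Γ s) (hA : A ∈ canE Γ t) : B ∈ canE Γ (.app s t) := by
  have hAsub : A.kocc ⊆ (A.imp B).kocc := fun a ha => by simp [Fm.kocc, ha]
  have hBsub : B.kocc ⊆ (A.imp B).kocc := fun a ha => by simp [Fm.kocc, ha]
  rw [← not_not (a := B ∈ _), notMem_canE_iff hmax hclosed hBsub]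
  intro h
  rcases mem_or_mem_of_rule hmax hclosed h (closed_neg_just (XPar.image_inr _))
    (closed_neg_just (XPar.image_inr _)) fun _ hS =>
      .fapp A hS (XPar.image_inr _) fun u hu => Finset.mem_image_of_mem _ (hAsub hu) with h | h
  · exact hAB h
  · exact (notMem_canE_iff hmax hclosed hAsub).2 h hA

lemma mem_canE_plus (hmax : MaximalCons CS Γ) (hclosed : ∀ F ∈ Γ, F.Closed) (s t : Tm) :
    canE Γ s ∪ canE Γ t ⊆ canE Γ (.plus s t) := by
  intro A hA h
  have hst := mem_and_mem_of_rule hmax hclosed h (closed_neg_just (XPar.image_inr _))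
    (closed_neg_just (XPar.image_inr _)) fun _ hS => .fplus hS (XPar.image_inr _)
  exact hA.elim (· hst.1) (· hst.2)

lemma mem_canE_bang (hmax : MaximalCons CS Γ) (hclosed : ∀ F ∈ Γ, F.Closed)
    {_ : DecidableEq (ℕ ⊕ ℕ)} {t : Tm} {A : Fm ℕ} {X : Finset ℕ} (hA : A ∈ canE Γ t)
    (hAX : A.kocc ⊆ X) : Fm.just t (X.image Sum.inr) A ∈ canE Γ (.bang t) := by
  have hX : XPar (X.image (Sum.inr : ℕ → ℕ ⊕ ℕ)) := XPar.image_inr X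
  intro h
  replace h : (Fm.just t.bang (X.image Sum.inr) (Fm.just t (X.image Sum.inr) A)).neg ∈ Γ := by
    convert h using 3
    ext (x | u)
    · simp
    · simpa [Fm.kocc] using fun h => hAX h
  have h' := mem_of_rule hmax hclosed h (closed_neg_just hX) fun _ hS => .fbang hS hX
  refine (notMem_canE_iff hmax hclosed hAX).2 ?_ hA
  convert h' using 3
  ext; simp

lemma mem_canE_gen (hmax : MaximalCons CS Γ) (hclosed : ∀ F ∈ Γ, F.Closed) {t : Tm} (x : ℕ)
    {A : Fm ℕ} (hA : A ∈ canE Γ t) : Fm.all x A ∈ canE Γ (.gen x t) :=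
  fun h => hA (mem_of_rule hmax hclosed h (closed_neg_just (XPar.image_inr _))
    fun _ hS => .genx hS (XPar.image_inr _))

lemma mem_canE_subst1 (hmax : MaximalCons CS Γ) (hclosed : ∀ F ∈ Γ, F.Closed) {t : Tm}
    {A : Fm ℕ} (x u : ℕ) (hA : A ∈ canE Γ t) : A.subst1 x u ∈ canE Γ t := by
  intro h
  have hsub : A.kocc ⊆ (A.subst1 x u).kocc := Fm.kocc_subset_kocc_msubst _ A
  refine (notMem_canE_iff hmax hclosed hsub).2 ?_ hA
  exact mem_of_rule hmax hclosed h (closed_neg_just (XPar.image_inr _))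
    fun _ hS => .ins x u hS (XPar.image_inr _)

end MaximalCons

theorem canonical_model_is_model_general
    (CS : Set (ℕ × Fm Empty))
    (Γ : Set (Fm ℕ)) (hclosed : ∀ F ∈ Γ, F.Closed)
    (hmax : MaximalCons CS Γ) :
    ∃ M : MModel CS ℕ, M.I = canI Γ ∧ M.E = canE Γ :=
  ⟨{ dom_nonempty := ⟨0⟩
     I := canI Γ
     E := canE Γ
     e1 := fun _ _ => hmax.1.toK_mem_canE_jconst
     e2 := fun _ _ _ _ => hmax.mem_canE_app hclosed
     e3 := hmax.mem_canE_plus hclosed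
     e4 := fun _ _ _ => hmax.mem_canE_bang hclosed
     e5 := fun _ x _ => hmax.mem_canE_gen hclosed x
     e6 := fun _ _ x u => hmax.mem_canE_subst1 hclosed x u }, rfl, rfl⟩

/-- the canonical model is a Mkrtychev model of `FOLP_CS`:
taking `D = Par`, `I(Q) = {(u₁,…,uₙ) | Q(u₁,…,uₙ) ∈ Γ}` and
`E(t) = {A | ¬t:_{Par(A)} A ∉ Γ}` yields an `FOLP_CS`-model, i.e. the
conditions E1–E6 all hold. -/
theorem canonical_model_is_model
    (CS : Set (ℕ × Fm Empty)) (hCS : ConstantSpec CS)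
    (Γ : Set (Fm ℕ)) (hclosed : ∀ F ∈ Γ, F.Closed)
    (hmax : MaximalCons CS Γ) (hE : EComplete Γ) :
    ∃ M : MModel CS ℕ, M.I = canI Γ ∧ M.E = canE Γ :=
  canonical_model_is_model_general CS Γ hclosed hmax
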